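/- arXiv:2211.10644 — 2 statements merged into one kernel-verified Lean document; each statement's English description precedes it below -/
import Mathlib

section
/- There exists a constant c > 0 such that for all integers n ≥ 3, Euler's totient function satisfies φ(n) ≥ c · n / log(log n). -/
open Finset Real

/-- telescoping over Ico -/
private lemma tele (g : ℕ → ℝ) {m n : ℕ} (h : m ≤ n) :
    ∑ i ∈ Finset.Ico m n, (g i - g (i + 1)) = g m - g n := by
  rw [Finset.sum_Ico_eq_sub _ h, Finset.sum_range_sub' g, Finset.sum_range_sub' g]
  ring

private lemma pp_dvd_factorial {p N : ℕ} (hp : p.Prime) : p ^ (N / p) ∣ Nat.factorial N := by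
  rcases le_or_gt p N with h | h
  · rw [Nat.Prime.pow_dvd_factorial_iff hp (Nat.lt_succ_self _)]
    have h1 : 1 ∈ Finset.Ico 1 (Nat.log p N + 1) := by
      simp [Nat.lt_succ_iff, Nat.log_pos hp.one_lt h]
    calc N / p = N / p ^ 1 := by rw [pow_one]
    _ ≤ ∑ i ∈ Finset.Ico 1 (Nat.log p N + 1), N / p ^ i :=
        Finset.single_le_sum (f := fun i => N / p ^ i) (fun i _ => Nat.zero_le _) h1
  · have : N / p = 0 := Nat.div_eq_of_lt h
    simp [this]

private lemma prod_pp_dvd {s : Finset ℕ} (hs : ∀ p ∈ s, p.Prime) {n : ℕ} {e : ℕ → ℕ}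
    (h : ∀ p ∈ s, p ^ e p ∣ n) : (∏ p ∈ s, p ^ e p) ∣ n := by
  induction s using Finset.cons_induction with
  | empty => simp
  | cons p s hps ih =>
    rw [Finset.prod_cons]
    have hp : p.Prime := hs p (Finset.mem_cons_self p s)
    have hcop : Nat.Coprime (p ^ e p) (∏ q ∈ s, q ^ e q) := by
      apply Nat.Coprime.prod_right
      intro q hq
      have hqp : q.Prime := hs q (Finset.mem_cons_of_mem hq)
      have hne : p ≠ q := by rintro rfl; exact hps hq
      exact Nat.Coprime.pow _ _ ((Nat.coprime_primes hp hqp).mpr hne)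
    exact hcop.mul_dvd_of_dvd_of_dvd (h p (Finset.mem_cons_self p s))
      (ih (fun q hq => hs q (Finset.mem_cons_of_mem hq))
        (fun q hq => h q (Finset.mem_cons_of_mem hq)))

open Finset Real

private lemma theta_bound (N : ℕ) :
    ∑ p ∈ Nat.primesBelow (N + 1), Real.log p ≤ N * Real.log 4 := by
  have h0 : ∀ p ∈ Nat.primesBelow (N + 1), ((p : ℝ)) ≠ 0 := by
    intro p hp
    have := (Nat.mem_primesBelow.mp hp).2.pos
    positivity
  have h1 : ∑ p ∈ Nat.primesBelow (N + 1), Real.log p = Real.log (primorial N) := by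
    rw [primorial, Nat.primesBelow, Nat.cast_prod, Real.log_prod (by
      intro p hp; exact h0 p (by rwa [Nat.primesBelow]))]
  rw [h1]
  calc Real.log (primorial N) ≤ Real.log ((4:ℕ) ^ N : ℕ) := by
        apply Real.log_le_log (by exact_mod_cast primorial_pos N)
        exact_mod_cast primorial_le_4_pow N
  _ = N * Real.log 4 := by
        push_cast
        rw [Real.log_pow]

private lemma T_bound {N : ℕ} (hN : 1 ≤ N) :
    ∑ p ∈ Nat.primesBelow (N + 1), Real.log p / p ≤ Real.log N + Real.log 4 := by
  have hN0 : (0:ℝ) < N := by exact_mod_cast hN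
  rw [← mul_le_mul_iff_right₀ hN0, Finset.mul_sum]
  set s := Nat.primesBelow (N + 1) with hs
  have hsp : ∀ p ∈ s, p.Prime := fun p hp => (Nat.mem_primesBelow.mp hp).2
  set M : ℕ := ∏ p ∈ s, p ^ (N / p) with hM
  have hMdvd : M ∣ Nat.factorial N :=
    prod_pp_dvd hsp (fun p hp => pp_dvd_factorial (hsp p hp))
  have hMpos : 0 < M := Finset.prod_pos fun p hp => pow_pos (hsp p hp).pos _
  have hMle : M ≤ N ^ N :=
    (Nat.le_of_dvd (Nat.factorial_pos N) hMdvd).trans (Nat.factorial_le_pow N)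
  have hlogM : Real.log M = ∑ p ∈ s, ((N / p : ℕ) : ℝ) * Real.log p := by
    rw [hM, Nat.cast_prod, Real.log_prod (by
      intro p hp
      have := (hsp p hp).pos
      positivity)]
    apply Finset.sum_congr rfl
    intro p hp
    push_cast
    rw [Real.log_pow]
  have hlogMle : Real.log M ≤ N * Real.log N := by
    calc Real.log M ≤ Real.log ((N:ℕ) ^ N : ℕ) := by
          apply Real.log_le_log (by exact_mod_cast hMpos)
          exact_mod_cast hMle
    _ = N * Real.log N := by push_cast; rw [Real.log_pow]
  calc ∑ p ∈ s, (N:ℝ) * (Real.log p / p)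
      ≤ ∑ p ∈ s, (((N / p : ℕ) : ℝ) * Real.log p + Real.log p) := by
        apply Finset.sum_le_sum
        intro p hp
        have hp2 := (hsp p hp).two_le
        have hppos : (0:ℝ) < p := by exact_mod_cast (hsp p hp).pos
        have hlp : 0 ≤ Real.log p := Real.log_nonneg (by exact_mod_cast hp2.trans' one_le_two)
        have hdiv : (N:ℝ) / p ≤ ((N / p : ℕ) : ℝ) + 1 := by
          rw [div_le_iff₀ hppos]
          have hmod : p * (N / p) + N % p = N := Nat.div_add_mod N p
          have hlt : N % p < p := Nat.mod_lt _ (hsp p hp).pos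
          have hnat : N ≤ (N / p + 1) * p := by nlinarith
          calc (N:ℝ) ≤ (((N / p + 1) * p : ℕ) : ℝ) := by exact_mod_cast hnat
          _ = (((N / p : ℕ) : ℝ) + 1) * p := by push_cast; ring
        calc (N:ℝ) * (Real.log p / p) = (N:ℝ) / p * Real.log p := by ring
        _ ≤ (((N / p : ℕ) : ℝ) + 1) * Real.log p := by
              exact mul_le_mul_of_nonneg_right hdiv hlp
        _ = ((N / p : ℕ) : ℝ) * Real.log p + Real.log p := by ring
  _ = Real.log M + ∑ p ∈ s, Real.log p := by rw [Finset.sum_add_distrib, hlogM]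
  _ ≤ N * Real.log N + N * Real.log 4 := by
        exact add_le_add hlogMle (theta_bound N)
  _ = N * (Real.log N + Real.log 4) := by ring
private noncomputable def aa (m : ℕ) : ℝ := if m.Prime then Real.log m / m else 0
private noncomputable def ff (m : ℕ) : ℝ := (Real.log m)⁻¹
private noncomputable def AA (n : ℕ) : ℝ := ∑ i ∈ Finset.range n, aa i

private lemma aa_nonneg (m : ℕ) : 0 ≤ aa m := by
  unfold aa
  split_ifs with h
  · have : (1:ℝ) ≤ m := by exact_mod_cast h.one_lt.le
    exact div_nonneg (Real.log_nonneg this) (by positivity)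
  · exact le_refl 0

private lemma AA_nonneg (n : ℕ) : 0 ≤ AA n :=
  Finset.sum_nonneg fun i _ => aa_nonneg i

private lemma AA_eq (N : ℕ) :
    AA (N + 1) = ∑ p ∈ Nat.primesBelow (N + 1), Real.log p / p := by
  rw [AA, Nat.primesBelow, Finset.sum_filter]
  rfl

private lemma AA_bound (i : ℕ) : AA (i + 1) ≤ Real.log i + Real.log 4 := by
  rcases Nat.eq_zero_or_pos i with rfl | hi
  · have : AA 1 = 0 := by simp [AA, aa, Nat.not_prime_zero]
    rw [this]
    have h4 : 0 ≤ Real.log 4 := Real.log_nonneg (by norm_num)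
    have h0 : Real.log (0:ℕ) = 0 := by norm_num
    rw [h0]; linarith
  · rw [AA_eq]; exact T_bound hi

private lemma AA_two : AA 2 = 0 := by
  simp [AA, aa, Finset.sum_range_succ, Nat.not_prime_zero, Nat.not_prime_one]

private lemma AA_one : AA 1 = 0 := by simp [AA, aa, Nat.not_prime_zero]

private lemma log_four_le_two : Real.log 4 ≤ 2 := by
  have : (4:ℝ) = 2 ^ 2 := by norm_num
  rw [this, Real.log_pow]
  have := Real.log_two_lt_d9
  push_cast
  nlinarith

private lemma P_bound {N : ℕ} (hN : 2 ≤ N) :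
    ∑ p ∈ Nat.primesBelow (N + 1), ((p : ℝ))⁻¹ ≤ Real.log (Real.log N) + 7 := by
  have hlog2 : (0.6931471803 : ℝ) < Real.log 2 := Real.log_two_gt_d9
  have hlogN : Real.log 2 ≤ Real.log N := by
    apply Real.log_le_log (by norm_num)
    exact_mod_cast hN
  have hlogNpos : 0 < Real.log N := by linarith
  -- rewrite as a range sum
  have h1 : ∑ p ∈ Nat.primesBelow (N + 1), ((p : ℝ))⁻¹
      = ∑ i ∈ Finset.range (N + 1), ff i * aa i := by
    rw [Nat.primesBelow, Finset.sum_filter]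
    apply Finset.sum_congr rfl
    intro i _
    by_cases hp : i.Prime
    · rw [if_pos hp, ff, aa, if_pos hp]
      have hl : Real.log i ≠ 0 :=
        ne_of_gt (Real.log_pos (by exact_mod_cast hp.one_lt))
      rw [div_eq_mul_inv, ← mul_assoc, inv_mul_cancel₀ hl, one_mul]
    · rw [if_neg hp, aa, if_neg hp, mul_zero]
  -- Abel summation
  have hbp0 := Finset.sum_range_by_parts ff aa (N + 1)
  simp only [smul_eq_mul, Nat.add_sub_cancel] at hbp0
  have hbp : ∑ i ∈ Finset.range (N + 1), ff i * aa i
      = ff N * AA (N + 1) - ∑ i ∈ Finset.range N, (ff (i + 1) - ff i) * AA (i + 1) := by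
    unfold AA
    exact hbp0
  rw [h1, hbp]
  -- boundary term
  have hbound : ff N * AA (N + 1) ≤ 3 := by
    have hffN : 0 ≤ ff N := le_of_lt (by rw [ff]; positivity)
    have h2 : ff N * AA (N + 1) ≤ ff N * (Real.log N + Real.log 4) :=
      mul_le_mul_of_nonneg_left (AA_bound N) hffN
    have h3 : ff N * (Real.log N + Real.log 4) = 1 + (Real.log N)⁻¹ * Real.log 4 := by
      rw [ff, mul_add, inv_mul_cancel₀ (ne_of_gt hlogNpos)]
    have h4 : (Real.log N)⁻¹ * Real.log 4 ≤ 2 := by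
      have hi : (Real.log N)⁻¹ ≤ (Real.log 2)⁻¹ := inv_anti₀ (by linarith) hlogN
      have h5 : (Real.log N)⁻¹ * Real.log 4 ≤ (Real.log 2)⁻¹ * Real.log 4 := by
        apply mul_le_mul_of_nonneg_right hi (Real.log_nonneg (by norm_num))
      have h6 : (Real.log 2)⁻¹ * Real.log 4 = 2 := by
        have : (4:ℝ) = 2 ^ 2 := by norm_num
        rw [this, Real.log_pow]
        push_cast
        field_simp
      linarith
    linarith
  -- the subtracted sum
  have hneg : ∑ i ∈ Finset.range N, (ff (i + 1) - ff i) * AA (i + 1)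
      = -∑ i ∈ Finset.range N, (ff i - ff (i + 1)) * AA (i + 1) := by
    rw [← Finset.sum_neg_distrib]
    exact Finset.sum_congr rfl fun i _ => by ring
  rw [hneg, sub_neg_eq_add]
  -- bound the main sum
  have hsplit : ∑ i ∈ Finset.range N, (ff i - ff (i + 1)) * AA (i + 1)
      = ∑ i ∈ Finset.Ico 2 N, (ff i - ff (i + 1)) * AA (i + 1) := by
    rw [Finset.range_eq_Ico, ← Finset.sum_Ico_consecutive _ (by norm_num : (0:ℕ) ≤ 2) hN]
    have h0 : ∑ i ∈ Finset.Ico 0 2, (ff i - ff (i + 1)) * AA (i + 1) = 0 := by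
      rw [show Finset.Ico 0 2 = Finset.range 2 from rfl]
      simp [Finset.sum_range_succ, AA_one, AA_two]
    rw [h0, zero_add]
  rw [hsplit]
  -- termwise bound
  have hterm : ∀ i ∈ Finset.Ico 2 N, (ff i - ff (i + 1)) * AA (i + 1)
      ≤ (Real.log (Real.log (i+1)) - Real.log (Real.log i)) + 2 * (ff i - ff (i + 1)) := by
    intro i hi
    obtain ⟨hi2, _⟩ := Finset.mem_Ico.mp hi
    have hi1 : (1:ℝ) < i := by exact_mod_cast hi2
    have hli : 0 < Real.log i := Real.log_pos hi1
    have hli1 : 0 < Real.log ((i:ℕ)+1 : ℕ) := Real.log_pos (by push_cast; linarith)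
    have hcast : ((i + 1 : ℕ) : ℝ) = (i : ℝ) + 1 := by push_cast; ring
    have hmono : ff (i + 1) ≤ ff i := by
      rw [ff, ff]
      apply inv_anti₀ hli
      apply Real.log_le_log (by linarith)
      push_cast; linarith
    have hffnn : 0 ≤ ff i - ff (i + 1) := by linarith
    have hstep1 : (ff i - ff (i + 1)) * AA (i + 1)
        ≤ (ff i - ff (i + 1)) * (Real.log i + Real.log 4) :=
      mul_le_mul_of_nonneg_left (AA_bound i) hffnn
    have hx : (0:ℝ) < Real.log i / Real.log ((i+1 : ℕ)) := div_pos hli hli1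
    have hlogx : Real.log (Real.log i / Real.log ((i+1:ℕ)))
        = Real.log (Real.log i) - Real.log (Real.log ((i+1:ℕ))) :=
      Real.log_div (ne_of_gt hli) (ne_of_gt hli1)
    have hkey : (ff i - ff (i + 1)) * Real.log i
        ≤ Real.log (Real.log (i+1)) - Real.log (Real.log i) := by
      have h7 : (ff i - ff (i + 1)) * Real.log i
          = 1 - Real.log i / Real.log ((i+1:ℕ)) := by
        rw [ff, ff, sub_mul, inv_mul_cancel₀ (ne_of_gt hli), div_eq_mul_inv]
        ring
      have h8 := Real.log_le_sub_one_of_pos hx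
      rw [h7]
      rw [hlogx] at h8
      push_cast at h8 ⊢
      linarith
    have hlog4 : (ff i - ff (i + 1)) * Real.log 4 ≤ (ff i - ff (i + 1)) * 2 :=
      mul_le_mul_of_nonneg_left log_four_le_two hffnn
    calc (ff i - ff (i + 1)) * AA (i + 1)
        ≤ (ff i - ff (i + 1)) * (Real.log i + Real.log 4) := hstep1
      _ = (ff i - ff (i + 1)) * Real.log i + (ff i - ff (i + 1)) * Real.log 4 := by ring
      _ ≤ (Real.log (Real.log (i+1)) - Real.log (Real.log i)) + 2 * (ff i - ff (i + 1)) := by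
          have := hlog4
          linarith [hkey]
  have hsum := Finset.sum_le_sum hterm
  rw [Finset.sum_add_distrib] at hsum
  -- telescoping sums
  have htel1 : ∑ i ∈ Finset.Ico 2 N, (Real.log (Real.log (i+1)) - Real.log (Real.log i))
      = Real.log (Real.log N) - Real.log (Real.log 2) := by
    have ht := tele (fun j : ℕ => -Real.log (Real.log j)) hN
    have hc : ∑ i ∈ Finset.Ico 2 N, (Real.log (Real.log (i+1)) - Real.log (Real.log i))
        = ∑ i ∈ Finset.Ico 2 N,
            (-Real.log (Real.log (i:ℕ)) - -Real.log (Real.log ((i+1 : ℕ)))) := by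
      apply Finset.sum_congr rfl
      intro i _
      push_cast
      ring
    rw [hc, ht]
    have h2 : ((2:ℕ):ℝ) = 2 := by norm_num
    rw [h2]
    ring
  have htel2 : ∑ i ∈ Finset.Ico 2 N, (2 * (ff i - ff (i + 1)))
      = 2 * (ff 2 - ff N) := by
    rw [← Finset.mul_sum, tele ff hN]
  rw [htel1, htel2] at hsum
  -- numeric bounds on constants
  have hll2 : -Real.log (Real.log 2) ≤ 1 := by
    have h9 : Real.log ((Real.log 2)⁻¹) ≤ (Real.log 2)⁻¹ - 1 :=
      Real.log_le_sub_one_of_pos (by positivity)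
    rw [Real.log_inv] at h9
    have h10 : (Real.log 2)⁻¹ ≤ 2 := by
      rw [inv_le_iff_one_le_mul₀ (by linarith)]
      linarith
    linarith
  have hff2 : 2 * ff 2 ≤ 3 := by
    rw [ff]
    have hc : ((2:ℕ):ℝ) = 2 := by norm_num
    rw [hc]
    have h10 : (Real.log 2)⁻¹ ≤ 3/2 := by
      rw [inv_le_iff_one_le_mul₀ (by linarith)]
      linarith
    linarith
  have hffN : 0 ≤ ff N := le_of_lt (by rw [ff]; positivity)
  have hcast2 : Real.log (Real.log ((2:ℕ):ℝ)) = Real.log (Real.log 2) := by norm_num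
  push_cast at hsum
  linarith [hsum, hbound]
private lemma prod_anti {s t : Finset ℕ} (h : s ⊆ t) (f : ℕ → ℝ) (h0 : ∀ p ∈ t, 0 ≤ f p)
    (h1 : ∀ p ∈ t, f p ≤ 1) : ∏ p ∈ t, f p ≤ ∏ p ∈ s, f p := by
  rw [← Finset.prod_sdiff h]
  have hs0 : 0 ≤ ∏ p ∈ s, f p := Finset.prod_nonneg fun p hp => h0 p (h hp)
  have hd0 : 0 ≤ ∏ p ∈ t \ s, f p :=
    Finset.prod_nonneg fun p hp => h0 p (Finset.mem_sdiff.mp hp).1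
  have hd1 : ∏ p ∈ t \ s, f p ≤ 1 :=
    Finset.prod_le_one (fun p hp => h0 p (Finset.mem_sdiff.mp hp).1)
      (fun p hp => h1 p (Finset.mem_sdiff.mp hp).1)
  nlinarith

private lemma prod_bound {N : ℕ} (hN : 2 ≤ N) :
    Real.exp (-(Real.log (Real.log N) + 8))
      ≤ ∏ p ∈ Nat.primesBelow (N + 1), (1 - ((p:ℝ))⁻¹) := by
  set s := Nat.primesBelow (N + 1) with hs
  have hsp : ∀ p ∈ s, p.Prime := fun p hp => (Nat.mem_primesBelow.mp hp).2
  -- sum of 1/(p-1) bound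
  have hsub : s ⊆ Finset.Ico 2 (N + 1) := by
    intro p hp
    rw [Finset.mem_Ico]
    exact ⟨(hsp p hp).two_le, (Nat.mem_primesBelow.mp hp).1⟩
  have htele : ∑ m ∈ Finset.Ico 2 (N + 1), (((m:ℝ) - 1)⁻¹ - ((m:ℝ))⁻¹) ≤ 1 := by
    have ht := tele (fun m : ℕ => ((m:ℝ) - 1)⁻¹) (by omega : 2 ≤ N + 1)
    have hc : ∑ m ∈ Finset.Ico 2 (N + 1), (((m:ℝ) - 1)⁻¹ - ((m:ℝ))⁻¹)
        = ∑ m ∈ Finset.Ico 2 (N + 1), (((m:ℝ) - 1)⁻¹ - (((m+1:ℕ):ℝ) - 1)⁻¹) := by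
      apply Finset.sum_congr rfl
      intro m _
      push_cast
      norm_num
    rw [hc, ht]
    push_cast
    have h0N : (0:ℝ) ≤ ((N:ℝ) + 1 - 1)⁻¹ :=
      inv_nonneg.mpr (by linarith [Nat.cast_nonneg (α := ℝ) N])
    norm_num at h0N ⊢
    try linarith
  have hsum2 : ∑ p ∈ s, (((p:ℝ) - 1)⁻¹ - ((p:ℝ))⁻¹) ≤ 1 := by
    refine le_trans (Finset.sum_le_sum_of_subset_of_nonneg hsub ?_) htele
    intro m hm _
    obtain ⟨hm2, _⟩ := Finset.mem_Ico.mp hm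
    have h1m : (1:ℝ) ≤ (m:ℝ) - 1 := by
      have : (2:ℝ) ≤ (m:ℝ) := by exact_mod_cast hm2
      linarith
    have : ((m:ℝ))⁻¹ ≤ ((m:ℝ) - 1)⁻¹ := by
      apply inv_anti₀ (by linarith)
      linarith
    linarith
  have hsum : ∑ p ∈ s, ((p:ℝ) - 1)⁻¹ ≤ Real.log (Real.log N) + 8 := by
    have hP := P_bound hN
    have : ∑ p ∈ s, ((p:ℝ) - 1)⁻¹
        = ∑ p ∈ s, ((p:ℝ))⁻¹ + ∑ p ∈ s, (((p:ℝ) - 1)⁻¹ - ((p:ℝ))⁻¹) := by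
      rw [← Finset.sum_add_distrib]
      apply Finset.sum_congr rfl
      intro p _
      ring
    rw [this]
    linarith
  -- per-prime: exp(-(1/(p-1))) ≤ 1 - 1/p
  have hper : ∀ p ∈ s, Real.exp (-((p:ℝ) - 1)⁻¹) ≤ 1 - ((p:ℝ))⁻¹ := by
    intro p hp
    have hp2 : (2:ℝ) ≤ (p:ℝ) := by exact_mod_cast (hsp p hp).two_le
    have ht1 : (0:ℝ) < (p:ℝ) - 1 := by linarith
    have htp : (0:ℝ) < (p:ℝ) := by linarith
    have hquot : (0:ℝ) < (p:ℝ) / ((p:ℝ) - 1) := by positivity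
    have hlog := Real.log_le_sub_one_of_pos hquot
    have heq : (p:ℝ) / ((p:ℝ) - 1) - 1 = ((p:ℝ) - 1)⁻¹ := by
      field_simp
      ring
    rw [heq] at hlog
    have hlogdiv : Real.log ((p:ℝ) / ((p:ℝ) - 1)) = -Real.log (((p:ℝ) - 1) / (p:ℝ)) := by
      rw [Real.log_div (by linarith) (by linarith), Real.log_div (by linarith) (by linarith)]
      ring
    have h2 : -((p:ℝ) - 1)⁻¹ ≤ Real.log (((p:ℝ) - 1) / (p:ℝ)) := by
      rw [hlogdiv] at hlog
      linarith
    calc Real.exp (-((p:ℝ) - 1)⁻¹) ≤ Real.exp (Real.log (((p:ℝ) - 1) / (p:ℝ))) :=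
          Real.exp_le_exp.mpr h2
    _ = ((p:ℝ) - 1) / (p:ℝ) := Real.exp_log (by positivity)
    _ = 1 - ((p:ℝ))⁻¹ := by field_simp
  calc Real.exp (-(Real.log (Real.log N) + 8))
      ≤ Real.exp (-∑ p ∈ s, ((p:ℝ) - 1)⁻¹) := Real.exp_le_exp.mpr (by linarith)
  _ = ∏ p ∈ s, Real.exp (-((p:ℝ) - 1)⁻¹) := by
      rw [← Real.exp_sum]
      congr 1
      rw [← Finset.sum_neg_distrib]
  _ ≤ ∏ p ∈ s, (1 - ((p:ℝ))⁻¹) :=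
      Finset.prod_le_prod (fun p _ => (Real.exp_pos _).le) hper
set_option maxHeartbeats 2000000 in
/-- There exists `c > 0` such that for all `n ≥ 3`,
`φ(n) ≥ c · n / log (log n)`. -/
theorem stmt2 :
    ∃ c : ℝ, 0 < c ∧ ∀ n : ℕ, 3 ≤ n →
      (Nat.totient n : ℝ) ≥ c * n / Real.log (Real.log n) := by
  have hexp1 : Real.exp 1 < 2.7182818286 := Real.exp_one_lt_d9
  have hlog2 : (0.6931471803 : ℝ) < Real.log 2 := Real.log_two_gt_d9
  have hlog3 : (1:ℝ) < Real.log 3 := by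
    have : Real.exp 1 < 3 := by linarith
    calc (1:ℝ) = Real.log (Real.exp 1) := (Real.log_exp 1).symm
    _ < Real.log 3 := Real.log_lt_log (Real.exp_pos 1) this
  have hd : 0 < Real.log (Real.log 3) := Real.log_pos hlog3
  set c : ℝ := min (Real.exp (-8) / 6) (Real.log (Real.log 3) / 15) with hc
  have hcpos : 0 < c := lt_min (by positivity) (by positivity)
  refine ⟨c, hcpos, ?_⟩
  intro n hn3
  have hn0 : 0 < n := by omega
  have hlogn3 : Real.log 3 ≤ Real.log n := by
    apply Real.log_le_log (by norm_num)
    exact_mod_cast hn3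
  have hlogn1 : (1:ℝ) < Real.log n := lt_of_lt_of_le hlog3 hlogn3
  have hLL3 : Real.log (Real.log 3) ≤ Real.log (Real.log n) :=
    Real.log_le_log (by linarith) hlogn3
  have hLLpos : 0 < Real.log (Real.log n) := lt_of_lt_of_le hd hLL3
  rw [ge_iff_le, div_le_iff₀ hLLpos]
  rcases lt_or_ge n 16 with hsmall | hbig
  · -- small case: 3 ≤ n ≤ 15
    have hφ : (1:ℝ) ≤ (Nat.totient n : ℝ) := by
      have : 0 < Nat.totient n := Nat.totient_pos.mpr hn0
      exact_mod_cast this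
    have hcn : c * n ≤ Real.log (Real.log 3) := by
      have h1 : c ≤ Real.log (Real.log 3) / 15 := min_le_right _ _
      have h2 : (n:ℝ) ≤ 15 := by exact_mod_cast Nat.lt_succ_iff.mp hsmall
      calc c * n ≤ (Real.log (Real.log 3) / 15) * 15 := by
            apply mul_le_mul h1 h2 (by positivity) (by positivity)
      _ = Real.log (Real.log 3) := by ring
    calc c * (n:ℝ) ≤ Real.log (Real.log 3) := hcn
    _ ≤ Real.log (Real.log n) := hLL3
    _ = 1 * Real.log (Real.log n) := by ring
    _ ≤ (Nat.totient n : ℝ) * Real.log (Real.log n) := by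
        apply mul_le_mul_of_nonneg_right hφ (le_of_lt hLLpos)
  · -- main case: n ≥ 16
    set L : ℝ := Real.log n with hLdef
    set LL : ℝ := Real.log L with hLLdef
    have hL16 : Real.log 16 ≤ L := by
      apply Real.log_le_log (by norm_num)
      exact_mod_cast hbig
    have hlog16 : (2.7182818286:ℝ) < Real.log 16 := by
      have h16 : (16:ℝ) = 2 ^ 4 := by norm_num
      rw [h16, Real.log_pow]
      push_cast
      nlinarith
    have hLe : Real.exp 1 ≤ L := by linarith
    have hLpos : 0 < L := by linarith
    have hLL1 : (1:ℝ) ≤ LL := by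
      rw [hLLdef]
      calc (1:ℝ) = Real.log (Real.exp 1) := (Real.log_exp 1).symm
      _ ≤ Real.log L := Real.log_le_log (Real.exp_pos 1) hLe
    have hLLpos' : 0 < LL := by linarith
    have hL2 : (2:ℝ) < L := by linarith
    -- the splitting point
    set y : ℕ := ⌈L ^ 2⌉₊ with hy
    have hyL : L ^ 2 ≤ (y:ℝ) := Nat.le_ceil _
    have hyU : (y:ℝ) ≤ 2 * L ^ 2 := by
      have h1 : (y:ℝ) < L ^ 2 + 1 := Nat.ceil_lt_add_one (by positivity)
      nlinarith
    have hy2 : 2 ≤ y := by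
      have : (2:ℝ) ≤ (y:ℝ) := by nlinarith
      exact_mod_cast this
    have hy0 : (0:ℝ) < y := by
      have : (0:ℕ) < y := by omega
      exact_mod_cast this
    have hlogy_pos : 0 < Real.log y := Real.log_pos (by nlinarith)
    have hlogy : Real.log y ≤ 3 * LL := by
      calc Real.log y ≤ Real.log (2 * L ^ 2) := Real.log_le_log hy0 hyU
      _ = Real.log 2 + 2 * LL := by
          rw [Real.log_mul (by norm_num) (by positivity), hLLdef]
          rw [show L ^ 2 = L^(2:ℕ) by norm_num, Real.log_pow]
          push_cast
          ring
      _ ≤ 3 * LL := by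
          have h21 : Real.log 2 < 0.6931471808 := Real.log_two_lt_d9
          linarith
    -- totient product formula over ℝ
    set S : Finset ℕ := n.primeFactors with hS
    have hSp : ∀ p ∈ S, p.Prime := fun p hp => Nat.prime_of_mem_primeFactors hp
    have htot : (Nat.totient n : ℝ) = n * ∏ p ∈ S, (1 - ((p:ℝ))⁻¹) := by
      have hq := Nat.totient_eq_mul_prod_factors n
      have := congrArg (fun x : ℚ => (x : ℝ)) hq
      push_cast at this
      exact_mod_cast this
    -- split the product
    have hsplit : ∏ p ∈ S, (1 - ((p:ℝ))⁻¹)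
        = (∏ p ∈ S.filter (fun p => p ≤ y), (1 - ((p:ℝ))⁻¹))
          * ∏ p ∈ S.filter (fun p => ¬ p ≤ y), (1 - ((p:ℝ))⁻¹) :=
      (Finset.prod_filter_mul_prod_filter_not S _ _).symm
    -- small primes
    have hfac01 : ∀ p ∈ Nat.primesBelow (y + 1), 0 ≤ 1 - ((p:ℝ))⁻¹ ∧ 1 - ((p:ℝ))⁻¹ ≤ 1 := by
      intro p hp
      have hp2 : (2:ℝ) ≤ (p:ℝ) := by exact_mod_cast (Nat.mem_primesBelow.mp hp).2.two_le
      have hinv : (0:ℝ) < ((p:ℝ))⁻¹ := by positivity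
      have hinv2 : ((p:ℝ))⁻¹ ≤ 1/2 := by
        rw [inv_le_iff_one_le_mul₀ (by linarith)]
        linarith
      constructor <;> linarith
    have hsubs : S.filter (fun p => p ≤ y) ⊆ Nat.primesBelow (y + 1) := by
      intro p hp
      obtain ⟨hpS, hpy⟩ := Finset.mem_filter.mp hp
      exact Nat.mem_primesBelow.mpr ⟨by omega, hSp p hpS⟩
    have hsmall1 : Real.exp (-(Real.log (Real.log y) + 8))
        ≤ ∏ p ∈ S.filter (fun p => p ≤ y), (1 - ((p:ℝ))⁻¹) := by
      refine le_trans (prod_bound hy2) (prod_anti hsubs _ ?_ ?_)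
      · exact fun p hp => (hfac01 p hp).1
      · exact fun p hp => (hfac01 p hp).2
    have hsmall2 : Real.exp (-8) / (3 * LL)
        ≤ ∏ p ∈ S.filter (fun p => p ≤ y), (1 - ((p:ℝ))⁻¹) := by
      refine le_trans ?_ hsmall1
      rw [show -(Real.log (Real.log y) + 8) = -8 + -Real.log (Real.log y) by ring,
        Real.exp_add, Real.exp_neg (Real.log (Real.log y)), Real.exp_log hlogy_pos]
      rw [div_eq_mul_inv]
      apply mul_le_mul_of_nonneg_left _ (Real.exp_pos _).le
      apply inv_anti₀ (by positivity) hlogy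
    -- big primes
    set B : Finset ℕ := S.filter (fun p => ¬ p ≤ y) with hB
    set k : ℕ := B.card with hk
    have hBy : ∀ p ∈ B, L ^ 2 ≤ (p:ℝ) := by
      intro p hp
      have : y < p := by
        have := (Finset.mem_filter.mp hp).2
        omega
      have : (y:ℝ) < (p:ℝ) := by exact_mod_cast this
      linarith
    have hkbound : (k:ℝ) * (2 * LL) ≤ L := by
      have hdvd : ∏ p ∈ B, p ∣ n := by
        refine dvd_trans (Finset.prod_dvd_prod_of_subset B S _ (Finset.filter_subset _ _)) ?_
        exact Nat.prod_primeFactors_dvd n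
      have hprodle : (∏ p ∈ B, (p:ℝ)) ≤ n := by
        have h1 : ∏ p ∈ B, p ≤ n := Nat.le_of_dvd hn0 hdvd
        have h2 := (Nat.cast_le (α := ℝ)).mpr h1
        push_cast at h2
        exact h2
      have hpow : (L ^ 2) ^ k ≤ ∏ p ∈ B, (p:ℝ) := by
        have h := Finset.prod_le_prod (f := fun _ : ℕ => L ^ 2) (g := fun p : ℕ => (p:ℝ))
          (fun i _ => by positivity) hBy
        rw [Finset.prod_const] at h
        rw [hk]
        exact h
      have hL2pos : (0:ℝ) < L ^ 2 := by positivity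
      have hlogle : Real.log ((L ^ 2) ^ k) ≤ Real.log n :=
        Real.log_le_log (by positivity) (le_trans hpow hprodle)
      rw [Real.log_pow] at hlogle
      have : Real.log (L ^ 2) = 2 * LL := by
        rw [show L ^ 2 = L^(2:ℕ) by norm_num, Real.log_pow, hLLdef]
        push_cast
        ring
      rw [this] at hlogle
      exact hlogle
    have hbig1 : (1:ℝ)/2 ≤ ∏ p ∈ B, (1 - ((p:ℝ))⁻¹) := by
      have hL21 : (1:ℝ) < L ^ 2 := by nlinarith
      have hconst : ∀ p ∈ B, 1 - (L ^ 2)⁻¹ ≤ 1 - ((p:ℝ))⁻¹ := by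
        intro p hp
        have h1 := hBy p hp
        have hppos : (0:ℝ) < (p:ℝ) := by nlinarith
        have : ((p:ℝ))⁻¹ ≤ (L ^ 2)⁻¹ := inv_anti₀ (by positivity) h1
        linarith
      have hcpos' : (0:ℝ) ≤ 1 - (L ^ 2)⁻¹ := by
        have : (L ^ 2)⁻¹ ≤ 1 := by
          rw [inv_le_one_iff₀]
          right; linarith
        linarith
      have hprodge : (1 - (L ^ 2)⁻¹) ^ k ≤ ∏ p ∈ B, (1 - ((p:ℝ))⁻¹) := by
        have h := Finset.prod_le_prod (f := fun _ : ℕ => 1 - (L ^ 2)⁻¹)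
          (g := fun p : ℕ => 1 - ((p:ℝ))⁻¹) (fun i _ => hcpos') hconst
        rw [Finset.prod_const] at h
        rw [hk]
        exact h
      have hbern : 1 + (k:ℝ) * (-(L ^ 2)⁻¹) ≤ (1 + (-(L ^ 2)⁻¹)) ^ k := by
        apply one_add_mul_le_pow
        have : (L ^ 2)⁻¹ ≤ 1 := by
          rw [inv_le_one_iff₀]; right; linarith
        linarith
      have hhalf : (1:ℝ)/2 ≤ 1 + (k:ℝ) * (-(L ^ 2)⁻¹) := by
        have hkL : (k:ℝ) ≤ L / (2 * LL) := by
          rw [le_div_iff₀ (by positivity)]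
          linarith
        have h2 : (k:ℝ) * (L ^ 2)⁻¹ ≤ (L / (2 * LL)) * (L ^ 2)⁻¹ := by
          apply mul_le_mul_of_nonneg_right hkL (by positivity)
        have h3 : (L / (2 * LL)) * (L ^ 2)⁻¹ = 1 / (2 * LL * L) := by
          field_simp
        have h4 : 1 / (2 * LL * L) ≤ 1/2 := by
          apply div_le_div_of_nonneg_left (by norm_num) (by norm_num) ?_
          nlinarith
        nlinarith [h2, h3.le, h4]
      calc (1:ℝ)/2 ≤ 1 + (k:ℝ) * (-(L ^ 2)⁻¹) := hhalf
      _ ≤ (1 + (-(L ^ 2)⁻¹)) ^ k := hbern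
      _ = (1 - (L ^ 2)⁻¹) ^ k := by ring_nf
      _ ≤ ∏ p ∈ B, (1 - ((p:ℝ))⁻¹) := hprodge
    -- combine
    have hsmallpos : (0:ℝ) < Real.exp (-8) / (3 * LL) := by positivity
    have hprod_ge : Real.exp (-8) / (3 * LL) * (1/2) ≤ ∏ p ∈ S, (1 - ((p:ℝ))⁻¹) := by
      rw [hsplit]
      apply mul_le_mul hsmall2 hbig1 (by norm_num) ?_
      exact le_trans hsmallpos.le hsmall2
    have hcle : c ≤ Real.exp (-8) / 6 := min_le_left _ _
    have hnpos : (0:ℝ) < n := by exact_mod_cast hn0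
    have hLLne : LL ≠ 0 := ne_of_gt hLLpos'
    rw [htot]
    have hPge : c / LL ≤ ∏ p ∈ S, (1 - ((p:ℝ))⁻¹) := by
      refine le_trans ?_ hprod_ge
      have heq : Real.exp (-8) / (3 * LL) * (1/2) = (Real.exp (-8) / 6) / LL := by
        field_simp
        ring
      rw [heq]
      exact (div_le_div_iff_of_pos_right hLLpos').mpr hcle
    calc c * (n:ℝ) = (n:ℝ) * (c / LL) * LL := by
          field_simp
    _ ≤ (n:ℝ) * (∏ p ∈ S, (1 - ((p:ℝ))⁻¹)) * LL := by
          apply mul_le_mul_of_nonneg_right _ hLLpos'.le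
          exact mul_le_mul_of_nonneg_left hPge hnpos.le
end

section
/- Let P ∈ ℤ[X] and for each integer n ≥ 2 let f(n) be the number of k ∈ {0,1,…,n-1} with n | P(k), and let φ_P(n) be the number of k ∈ {0,1,…,n-1} with gcd(P(k), n) = 1. Then φ_P(n) = n · ∏_{p | n} (1 - f(p)/p), the product being over the distinct primes dividing n. -/
open Finset Polynomial

/-- `IsUnit (x : ZMod n)` iff `Int.gcd x n = 1`. -/
private lemma aux_isUnit_intCast_iff (n : ℕ) (x : ℤ) :
    IsUnit ((x : ZMod n)) ↔ Int.gcd x n = 1 := by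
  have hnat : ∀ m : ℕ, (IsUnit (((m : ℤ) : ZMod n)) ↔ Int.gcd (m : ℤ) n = 1) := by
    intro m
    rw [Int.cast_natCast, ZMod.isUnit_iff_coprime]
    simp [Int.gcd, Nat.Coprime]
  rcases Int.natAbs_eq x with h | h
  · rw [h]; exact hnat _
  · rw [h, Int.cast_neg, IsUnit.neg_iff _, Int.neg_gcd]
    exact hnat _

/-- casts of evals agree when inputs agree mod n -/
private lemma aux_eval_cast (P : Polynomial ℤ) (n : ℕ) {a b : ℤ} (h : ((a : ZMod n)) = (b : ZMod n)) :
    ((P.eval a : ℤ) : ZMod n) = ((P.eval b : ℤ) : ZMod n) := by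
  have key : ∀ x : ℤ, ((P.eval x : ℤ) : ZMod n) = P.eval₂ (Int.castRingHom (ZMod n)) ((x : ZMod n)) := by
    intro x
    rw [show ((x : ZMod n)) = (Int.castRingHom (ZMod n)) x from rfl, Polynomial.eval₂_hom]
    rfl
  rw [key, key, h]

/-- gcd condition depends only on k mod n -/
private lemma aux_gcd_mod (P : Polynomial ℤ) (n k : ℕ) :
    Int.gcd (P.eval (k : ℤ)) n = 1 ↔ Int.gcd (P.eval ((k % n : ℕ) : ℤ)) n = 1 := by
  rw [← aux_isUnit_intCast_iff, ← aux_isUnit_intCast_iff]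
  rw [aux_eval_cast P n (a := (k : ℤ)) (b := ((k % n : ℕ) : ℤ)) (by push_cast; simp [ZMod.natCast_mod])]

/-- dvd condition depends only on k mod p -/
private lemma aux_dvd_mod (P : Polynomial ℤ) (p k : ℕ) :
    (p : ℤ) ∣ P.eval (k : ℤ) ↔ (p : ℤ) ∣ P.eval ((k % p : ℕ) : ℤ) := by
  rw [← ZMod.intCast_zmod_eq_zero_iff_dvd, ← ZMod.intCast_zmod_eq_zero_iff_dvd]
  rw [aux_eval_cast P p (a := (k : ℤ)) (b := ((k % p : ℕ) : ℤ)) (by push_cast; simp [ZMod.natCast_mod])]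

/-- periodic counting -/
private lemma aux_count_period (q : ℕ → Prop) [DecidablePred q] (a b : ℕ) :
    ((range (a * b)).filter (fun k => q (k % b))).card
      = a * ((range b).filter q).card := by
  rcases Nat.eq_zero_or_pos b with rfl | hb
  · simp
  have h : ((range (a * b)).filter (fun k => q (k % b))).card
      = (((range a) ×ˢ (range b)).filter (fun x => q x.2)).card := by
    apply Finset.card_bij' (fun k _ => (k / b, k % b)) (fun x _ => x.1 * b + x.2)
    · intro k hk
      simp only [mem_filter, mem_range] at hk ⊢
      simp only [mem_product, mem_range]
      exact ⟨⟨Nat.div_lt_of_lt_mul (by rw [mul_comm]; exact hk.1), Nat.mod_lt _ hb⟩, hk.2⟩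
    · intro x hx
      simp only [mem_filter, mem_product, mem_range] at hx ⊢
      have h1 : (x.1 * b + x.2) % b = x.2 := by
        rw [mul_comm, Nat.mul_add_mod]; exact Nat.mod_eq_of_lt hx.1.2
      refine ⟨?_, by rw [h1]; exact hx.2⟩
      calc x.1 * b + x.2 < x.1 * b + b := by omega
        _ = (x.1 + 1) * b := by ring
        _ ≤ a * b := Nat.mul_le_mul_right _ (by omega)
    · intro k hk
      exact (Nat.div_add_mod' k b)
    · intro x hx
      simp only [mem_filter, mem_product, mem_range] at hx
      have h1 : (x.1 * b + x.2) % b = x.2 := by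
        rw [mul_comm, Nat.mul_add_mod]; exact Nat.mod_eq_of_lt hx.1.2
      have h2 : (x.1 * b + x.2) / b = x.1 := by
        rw [mul_comm, Nat.mul_add_div hb, Nat.div_eq_of_lt hx.1.2, add_zero]
      rw [h1, h2]
  rw [h]
  have : ((range a) ×ˢ (range b)).filter (fun x => q x.2)
      = (range a) ×ˢ ((range b).filter q) := by
    ext x; simp [and_assoc]
  rw [this, Finset.card_product, card_range]

private lemma aux_gcd_pow (x : ℤ) (p e : ℕ) (hp : p.Prime) (he : 1 ≤ e) :
    Int.gcd x ((p ^ e : ℕ) : ℤ) = 1 ↔ ¬ (p : ℤ) ∣ x := by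
  haveI : Fact p.Prime := ⟨hp⟩
  rw [show (((p ^ e : ℕ)) : ℤ) = ((p : ℤ)) ^ e by push_cast; ring]
  rw [← Int.isCoprime_iff_gcd_eq_one, IsCoprime.pow_right_iff he, Int.isCoprime_iff_gcd_eq_one]
  rw [← aux_isUnit_intCast_iff, isUnit_iff_ne_zero, Ne, ZMod.intCast_zmod_eq_zero_iff_dvd]

private lemma aux_count_prime_pow (P : Polynomial ℤ) (p e : ℕ) (hp : p.Prime) (he : 1 ≤ e) :
    ((range (p ^ e)).filter (fun k : ℕ => Int.gcd (P.eval (k : ℤ)) ((p ^ e : ℕ)) = 1)).card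
      = p ^ (e - 1) * (p - ((range p).filter (fun k : ℕ => (p : ℤ) ∣ P.eval (k : ℤ))).card) := by
  classical
  have h1 : (range (p ^ e)).filter (fun k : ℕ => Int.gcd (P.eval (k : ℤ)) ((p ^ e : ℕ)) = 1)
      = (range (p ^ (e - 1) * p)).filter (fun k : ℕ => ¬ (p : ℤ) ∣ P.eval ((k % p : ℕ) : ℤ)) := by
    rw [show p ^ (e - 1) * p = p ^ e by rw [← pow_succ]; congr 1; omega]
    apply Finset.filter_congr
    intro k _
    exact (aux_gcd_pow _ p e hp he).trans (not_congr (aux_dvd_mod P p k))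
  rw [h1, aux_count_period (fun k => ¬ (p : ℤ) ∣ P.eval (k : ℤ)) (p ^ (e - 1)) p]
  congr 1
  rw [Finset.filter_not, card_sdiff_of_subset (filter_subset _ _), card_range]

private lemma aux_count_mul (P : Polynomial ℤ) {m n : ℕ} (h : Nat.Coprime m n)
    (hm : 0 < m) (hn : 0 < n) :
    ((range (m * n)).filter (fun k : ℕ => Int.gcd (P.eval (k : ℤ)) ((m * n : ℕ)) = 1)).card
      = ((range m).filter (fun k : ℕ => Int.gcd (P.eval (k : ℤ)) m = 1)).card
        * ((range n).filter (fun k : ℕ => Int.gcd (P.eval (k : ℤ)) n = 1)).card := by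
  have hsplit : ∀ x : ℤ, Int.gcd x ((m * n : ℕ)) = 1 ↔ Int.gcd x m = 1 ∧ Int.gcd x n = 1 := by
    intro x
    rw [← Int.isCoprime_iff_gcd_eq_one, ← Int.isCoprime_iff_gcd_eq_one, ← Int.isCoprime_iff_gcd_eq_one]
    push_cast
    exact IsCoprime.mul_right_iff
  rw [← Finset.card_product]
  apply Finset.card_bij' (fun k _ => ((k % m : ℕ), (k % n : ℕ)))
    (fun x _ => (Nat.chineseRemainder h x.1 x.2 : ℕ) % (m * n))
  · intro k hk
    simp only [mem_filter, mem_range] at hk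
    obtain ⟨h1, h2⟩ := (hsplit _).mp hk.2
    simp only [mem_product, mem_filter, mem_range]
    exact ⟨⟨Nat.mod_lt _ hm, (aux_gcd_mod P m k).mp h1⟩,
           ⟨Nat.mod_lt _ hn, (aux_gcd_mod P n k).mp h2⟩⟩
  · intro x hx
    simp only [mem_product, mem_filter, mem_range] at hx
    set c := (Nat.chineseRemainder h x.1 x.2 : ℕ) with hc
    have hc1 : c % m = x.1 := by
      have h' : c % m = x.1 % m := (Nat.chineseRemainder h x.1 x.2).2.1
      rw [h', Nat.mod_eq_of_lt hx.1.1]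
    have hc2 : c % n = x.2 := by
      have h' : c % n = x.2 % n := (Nat.chineseRemainder h x.1 x.2).2.2
      rw [h', Nat.mod_eq_of_lt hx.2.1]
    have e1 : (c % (m * n)) % m = x.1 := by rw [Nat.mod_mod_of_dvd _ ⟨n, rfl⟩, hc1]
    have e2 : (c % (m * n)) % n = x.2 := by rw [Nat.mod_mod_of_dvd _ ⟨m, mul_comm m n⟩, hc2]
    simp only [mem_filter, mem_range]
    refine ⟨Nat.mod_lt _ (mul_pos hm hn), ?_⟩
    rw [hsplit]
    exact ⟨by rw [aux_gcd_mod P m, e1]; exact hx.1.2, by rw [aux_gcd_mod P n, e2]; exact hx.2.2⟩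
  · intro k hk
    simp only [mem_filter, mem_range] at hk
    set c := (Nat.chineseRemainder h (k % m) (k % n) : ℕ) with hc
    have h1 : c ≡ k [MOD m] := (Nat.chineseRemainder h _ _).2.1.trans (Nat.mod_modEq k m)
    have h2 : c ≡ k [MOD n] := (Nat.chineseRemainder h _ _).2.2.trans (Nat.mod_modEq k n)
    have h3 : c ≡ k [MOD m * n] := (Nat.modEq_and_modEq_iff_modEq_mul h).mp ⟨h1, h2⟩
    have : c % (m * n) = k % (m * n) := h3
    rw [this, Nat.mod_eq_of_lt hk.1]
  · intro x hx
    simp only [mem_product, mem_filter, mem_range] at hx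
    set c := (Nat.chineseRemainder h x.1 x.2 : ℕ) with hc
    have hc1 : c % m = x.1 := by
      have h' : c % m = x.1 % m := (Nat.chineseRemainder h x.1 x.2).2.1
      rw [h', Nat.mod_eq_of_lt hx.1.1]
    have hc2 : c % n = x.2 := by
      have h' : c % n = x.2 % n := (Nat.chineseRemainder h x.1 x.2).2.2
      rw [h', Nat.mod_eq_of_lt hx.2.1]
    have e1 : (c % (m * n)) % m = x.1 := by rw [Nat.mod_mod_of_dvd _ ⟨n, rfl⟩, hc1]
    have e2 : (c % (m * n)) % n = x.2 := by rw [Nat.mod_mod_of_dvd _ ⟨m, mul_comm m n⟩, hc2]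
    rw [e1, e2]

private lemma aux_count_prod (P : Polynomial ℤ) (s : Finset ℕ) (hs : ∀ p ∈ s, p.Prime)
    (e : ℕ → ℕ) :
    ((range (∏ p ∈ s, p ^ e p)).filter
        (fun k : ℕ => Int.gcd (P.eval (k : ℤ)) ((∏ p ∈ s, p ^ e p : ℕ)) = 1)).card
      = ∏ p ∈ s, ((range (p ^ e p)).filter
          (fun k : ℕ => Int.gcd (P.eval (k : ℤ)) ((p ^ e p : ℕ)) = 1)).card := by
  induction s using Finset.cons_induction with
  | empty =>
    simp only [Finset.prod_empty]
    erw [show ((range 1).filter (fun k : ℕ => Int.gcd (P.eval (k : ℤ)) ((1 : ℕ)) = 1)) = {0} from by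
      ext k; simp [Int.gcd]]
    simp
  | cons a s ha ih =>
    have hs' : ∀ p ∈ s, p.Prime := fun p hp => hs p (Finset.mem_cons_of_mem hp)
    have hap : a.Prime := hs a (Finset.mem_cons_self a s)
    rw [Finset.prod_cons, Finset.prod_cons]
    have hcop : Nat.Coprime (a ^ e a) (∏ p ∈ s, p ^ e p) := by
      apply Nat.Coprime.pow_left
      apply Nat.Coprime.prod_right
      intro p hp
      exact Nat.Coprime.pow_right _
        ((Nat.coprime_primes hap (hs' p hp)).mpr (fun hEq => ha (hEq ▸ hp)))
    rw [aux_count_mul P hcop (pow_pos hap.pos _)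
        (Finset.prod_pos fun p hp => pow_pos (hs' p hp).pos _), ih hs']

/-- Let `f(p)` count `k ∈ {0,…,p-1}` with `p ∣ P(k)` and `φ_P(n)` count
`k ∈ {0,…,n-1}` with `gcd(P(k), n) = 1`. Then
`φ_P(n) = n · ∏_{p ∣ n} (1 - f(p)/p)` over the distinct primes dividing `n`. -/
theorem stmt6 (P : Polynomial ℤ) (n : ℕ) (hn : 2 ≤ n) :
    (((Finset.range n).filter (fun k : ℕ => Int.gcd (P.eval (k : ℤ)) n = 1)).card : ℝ) =
      n * ∏ p ∈ n.primeFactors,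
        (1 - (((Finset.range p).filter (fun k : ℕ => (p : ℤ) ∣ P.eval (k : ℤ))).card : ℝ) / p) := by
  have hn0 : n ≠ 0 := by omega
  have hfac : ∏ p ∈ n.primeFactors, p ^ n.factorization p = n := by
    rw [← Nat.support_factorization]
    exact Nat.factorization_prod_pow_eq_self hn0
  have hs : ∀ p ∈ n.primeFactors, p.Prime := fun p hp => Nat.prime_of_mem_primeFactors hp
  have he : ∀ p ∈ n.primeFactors, 1 ≤ n.factorization p := by
    intro p hp
    have := Finsupp.mem_support_iff.mp (by rw [Nat.support_factorization]; exact hp)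
    omega
  have h1 : ((range n).filter (fun k : ℕ => Int.gcd (P.eval (k : ℤ)) n = 1)).card
      = ∏ p ∈ n.primeFactors,
          p ^ (n.factorization p - 1)
            * (p - ((range p).filter (fun k : ℕ => (p : ℤ) ∣ P.eval (k : ℤ))).card) := by
    conv_lhs => rw [← hfac]
    rw [aux_count_prod P _ hs]
    exact Finset.prod_congr rfl fun p hp => aux_count_prime_pow P p _ (hs p hp) (he p hp)
  rw [h1]
  have hn' : (n : ℝ) = ∏ p ∈ n.primeFactors, (p : ℝ) ^ n.factorization p := by
    rw [show (n : ℝ) = ((∏ p ∈ n.primeFactors, p ^ n.factorization p : ℕ) : ℝ) by rw [hfac]]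
    push_cast; ring
  rw [hn', ← Finset.prod_mul_distrib, Nat.cast_prod]
  apply Finset.prod_congr rfl
  intro p hp
  have hR : ((range p).filter (fun k : ℕ => (p : ℤ) ∣ P.eval (k : ℤ))).card ≤ p := by
    calc _ ≤ (range p).card := Finset.card_filter_le _ _
      _ = p := card_range p
  have hp0 : (p : ℝ) ≠ 0 := Nat.cast_ne_zero.mpr (hs p hp).pos.ne'
  obtain ⟨e', hE⟩ : ∃ e', n.factorization p = e' + 1 :=
    ⟨n.factorization p - 1, by have := he p hp; omega⟩
  rw [hE]
  push_cast [Nat.cast_sub hR]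
  field_simp
  ring
end
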